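/- arXiv:2605.04955 — 4 statements merged into one kernel-verified Lean document; each statement's English description precedes it below -/
import Mathlib

section
/- In a discrete structural equation model, each variable is conditionally independent of its non-descendants given its parents: for every node i, every a ∈ A, and every tuple w of values indexed by N_i := {j ∈ [d] : j ≠ i and j is not a descendant of i}, writing p for the restriction of w to Pa_i (note Pa_i ⊆ N_i by acyclicity), P({V_i = a} ∩ {(V_j)_{j∈N_i} = w}) · P({(V_j)_{j∈Pa_i} = p}) = P({V_i = a} ∩ {(V_j)_{j∈Pa_i} = p}) · P({(V_j)_{j∈N_i} = w}). -/
/-!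
Fix the values `p` of the parents of `i`. On the event that the parents take these values,
`V i = a` is the event `ε i = a - f i p`. Every non-descendant of `i` has only non-descendants
as parents, so by well-founded induction along the DAG the non-descendants `V_N` are measurable
with respect to the noise `ε_N`, which is independent of `ε i`. Hence `ε i` is independent of
`V_N` and of `V_{Pa i}`, and both sides of the identity equal
`P(ε i = a - f i p) · P(V_N = w) · P(V_{Pa i} = p)`.
-/

open MeasureTheory

theorem parent_mem_nondesc {d : ℕ} {E : Fin d → Fin d → Prop}
    (hacyc : ∀ i, ¬ Relation.TransGen E i i) (i : Fin d)
    (j : {j : Fin d // E j i}) :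
    j.1 ≠ i ∧ ¬ Relation.TransGen E i j.1 := by
  constructor
  · intro h
    have hji := j.2
    rw [h] at hji
    exact hacyc i (Relation.TransGen.single hji)
  · intro h
    exact hacyc i (h.tail j.2)

open ProbabilityTheory

section DAG

variable {ι : Type*} {E : ι → ι → Prop}

theorem wellFounded_of_forall_not_transGen_self [Finite ι]
    (hacyc : ∀ i, ¬ Relation.TransGen E i i) : WellFounded E :=
  have : Std.Irrefl (Relation.TransGen E) := ⟨hacyc⟩
  Subrelation.wf .single (Finite.wellFounded_of_trans_of_irrefl (Relation.TransGen E))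

theorem nondesc_of_parent {i j k : ι} (hkj : E k j)
    (hj : j ≠ i ∧ ¬ Relation.TransGen E i j) : k ≠ i ∧ ¬ Relation.TransGen E i k :=
  ⟨fun hki => hj.2 (hki ▸ .single hkj), fun hik => hj.2 (hik.tail hkj)⟩

end DAG

section StructuralEquations

variable {ι Ω A : Type*} {E : ι → ι → Prop} [AddCommGroup A]
  {f : (j : ι) → ({k : ι // E k j} → A) → A} {ε V : ι → Ω → A}

theorem setOf_apply_eq_inter_eq_of_parents_eq {i : ι}
    (hV : ∀ ω, V i ω = f i (fun k => V k.1 ω) + ε i ω) (a : A) (p : {k // E k i} → A)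
    {T : Set Ω} (hT : ∀ ω ∈ T, ∀ k, V k.1 ω = p k) :
    {ω | V i ω = a} ∩ T = ε i ⁻¹' {a - f i p} ∩ T := by
  ext ω
  simp only [Set.mem_inter_iff, Set.mem_ofPred_eq, Set.mem_preimage, Set.mem_singleton_iff]
  refine and_congr_left fun hω => ?_
  rw [hV, show (fun k => V k.1 ω) = p from funext (hT ω hω), eq_sub_iff_add_eq']

theorem measurable_comap_noise_of_parentClosed [Finite ι] [Countable A] [MeasurableSpace A]
    [MeasurableSingletonClass A] (hwf : WellFounded E)
    (hV : ∀ j ω, V j ω = f j (fun k => V k.1 ω) + ε j ω)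
    {S : ι → Prop} (hS : ∀ j k, E k j → S j → S k) :
    Measurable[MeasurableSpace.comap (fun ω (k : {k // S k}) => ε k ω) inferInstance]
      fun ω (j : {j // S j}) => V j ω := by
  let m := MeasurableSpace.comap (fun ω (k : {k // S k}) => ε k ω) inferInstance
  have hε (k : ι) (hk : S k) : Measurable[m] (ε k) :=
    (measurable_pi_apply (⟨k, hk⟩ : {k // S k})).comp
      (comap_measurable fun ω (k : {k // S k}) => ε k ω)
  have hVS (j : ι) (hj : S j) : Measurable[m] (V j) := by
    induction j using hwf.induction with
    | _ j ih =>
      have hpa : Measurable[m] fun ω (k : {k // E k j}) => V k.1 ω :=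
        measurable_pi_iff.2 fun k => ih k k.2 (hS j k k.2 hj)
      have hVj : V j = (fun x : ({k // E k j} → A) × A => f j x.1 + x.2) ∘
          fun ω => ((fun k => V k.1 ω), ε j ω) := funext (hV j)
      rw [hVj]
      exact (measurable_of_countable _).comp (hpa.prodMk (hε j hj))
  exact measurable_pi_iff.2 fun j => hVS j j.2

end StructuralEquations

namespace ProbabilityTheory

variable {ι Ω A : Type*} [MeasurableSpace Ω] [MeasurableSpace A] {P : Measure Ω}

theorem iIndepFun.indepFun_subtype [Finite ι] {ε : ι → Ω → A} (hindep : iIndepFun ε P)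
    (hmeas : ∀ i, Measurable (ε i)) {S : ι → Prop} {i : ι} (hi : ¬ S i) :
    IndepFun (ε i) (fun ω (j : {j // S j}) => ε j ω) P := by
  classical
  have := Fintype.ofFinite ι
  have h := hindep.indepFun_finset {i} {j | S j} (by simpa using hi) hmeas
  exact h.comp (φ := fun x => x ⟨i, Finset.mem_singleton_self i⟩)
    (ψ := fun x (j : {j // S j}) => x ⟨j.1, by simpa using j.2⟩)
    (measurable_pi_apply (X := fun _ : ({i} : Finset ι) => A) _)
    (measurable_pi_lambda _ fun _ => measurable_pi_apply _)

theorem IndepFun.of_measurable_comap_right {β γ : Type*} [MeasurableSpace β]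
    [MeasurableSpace γ] {X : Ω → A} {U : Ω → β} {Y : Ω → γ} (h : IndepFun X U P)
    (hY : Measurable[MeasurableSpace.comap U inferInstance] Y) : IndepFun X Y P :=
  indep_of_indep_of_le_right h hY.comap_le

theorem measure_inter_mul_eq_of_indepFun {β γ : Type*} [MeasurableSingletonClass A]
    [MeasurableSpace β] [MeasurableSingletonClass β] [MeasurableSpace γ]
    [MeasurableSingletonClass γ] {X : Ω → A} {Y : Ω → β} {Z : Ω → γ}
    (hY : IndepFun X Y P) (hZ : IndepFun X Z P) (x : A) (y : β) (z : γ) :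
    P (X ⁻¹' {x} ∩ Y ⁻¹' {y}) * P (Z ⁻¹' {z}) = P (X ⁻¹' {x} ∩ Z ⁻¹' {z}) * P (Y ⁻¹' {y}) := by
  rw [hY.measure_inter_preimage_eq_mul _ _ (.singleton x) (.singleton y),
    hZ.measure_inter_preimage_eq_mul _ _ (.singleton x) (.singleton z)]
  ring

end ProbabilityTheory

theorem stmt4_general {d : ℕ} (E : Fin d → Fin d → Prop)
    (hacyc : ∀ i, ¬ Relation.TransGen E i i)
    {Ω A : Type*} [MeasurableSpace Ω] (P : Measure Ω)
    [Fintype A] [AddCommGroup A] [MeasurableSpace A] [MeasurableSingletonClass A]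
    (ε : Fin d → Ω → A) (hεmeas : ∀ i, Measurable (ε i))
    (hindep : ProbabilityTheory.iIndepFun ε P)
    (f : (i : Fin d) → ({j : Fin d // E j i} → A) → A)
    (V : Fin d → Ω → A)
    (hV : ∀ i ω, V i ω = f i (fun j => V j.1 ω) + ε i ω)
    (i : Fin d) (a : A)
    (w : {j : Fin d // j ≠ i ∧ ¬ Relation.TransGen E i j} → A) :
    P ({ω | V i ω = a}
        ∩ {ω | ∀ j : {j : Fin d // j ≠ i ∧ ¬ Relation.TransGen E i j}, V j.1 ω = w j})
      * P {ω | ∀ j : {j : Fin d // E j i}, V j.1 ω = w ⟨j.1, parent_mem_nondesc hacyc i j⟩}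
    = P ({ω | V i ω = a}
        ∩ {ω | ∀ j : {j : Fin d // E j i}, V j.1 ω = w ⟨j.1, parent_mem_nondesc hacyc i j⟩})
      * P {ω | ∀ j : {j : Fin d // j ≠ i ∧ ¬ Relation.TransGen E i j}, V j.1 ω = w j} := by
  let N : Fin d → Prop := fun j => j ≠ i ∧ ¬ Relation.TransGen E i j
  let W : Ω → ({j // N j} → A) := fun ω j => V j ω
  let p : {j // E j i} → A := fun j => w ⟨j.1, parent_mem_nondesc hacyc i j⟩
  let Wp : Ω → ({j // E j i} → A) := fun ω j => V j ω
  simp only [← funext_iff]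
  change P ({ω | V i ω = a} ∩ W ⁻¹' {w}) * P (Wp ⁻¹' {p})
    = P ({ω | V i ω = a} ∩ Wp ⁻¹' {p}) * P (W ⁻¹' {w})
  have hWmeas := measurable_comap_noise_of_parentClosed
    (wellFounded_of_forall_not_transGen_self hacyc) hV (S := N)
    fun _ _ hkj hj => nondesc_of_parent hkj hj
  have hindepN := hindep.indepFun_subtype hεmeas (S := N) (fun hi => hi.1 rfl)
  have hW : IndepFun (ε i) W P := hindepN.of_measurable_comap_right hWmeas
  have hWp : IndepFun (ε i) Wp P :=
    hW.comp measurable_id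
      (measurable_pi_lambda
        (fun (v : {j // N j} → A) (k : {k // E k i}) => v ⟨k, parent_mem_nondesc hacyc i k⟩)
        fun _ => measurable_pi_apply _)
  rw [setOf_apply_eq_inter_eq_of_parents_eq (hV i) a p (T := W ⁻¹' {w})
      fun _ hω k => congrFun hω ⟨k, parent_mem_nondesc hacyc i k⟩,
    setOf_apply_eq_inter_eq_of_parents_eq (hV i) a p (T := Wp ⁻¹' {p}) fun _ hω => congrFun hω]
  exact measure_inter_mul_eq_of_indepFun hW hWp (a - f i p) w p

/-- In a discrete structural equation model, each variable is conditionally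
independent of its non-descendants given its parents, stated via the product
formula for the corresponding events. -/
theorem stmt4 {d : ℕ} (E : Fin d → Fin d → Prop)
    (hacyc : ∀ i, ¬ Relation.TransGen E i i)
    {Ω A : Type*} [MeasurableSpace Ω] (P : Measure Ω) [IsProbabilityMeasure P]
    [Fintype A] [AddCommGroup A] [MeasurableSpace A] [MeasurableSingletonClass A]
    (ε : Fin d → Ω → A) (hεmeas : ∀ i, Measurable (ε i))
    (hindep : ProbabilityTheory.iIndepFun ε P)
    (f : (i : Fin d) → ({j : Fin d // E j i} → A) → A)
    (V : Fin d → Ω → A) (hVmeas : ∀ i, Measurable (V i))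
    (hV : ∀ i ω, V i ω = f i (fun j => V j.1 ω) + ε i ω)
    (i : Fin d) (a : A)
    (w : {j : Fin d // j ≠ i ∧ ¬ Relation.TransGen E i j} → A) :
    P ({ω | V i ω = a}
        ∩ {ω | ∀ j : {j : Fin d // j ≠ i ∧ ¬ Relation.TransGen E i j}, V j.1 ω = w j})
      * P {ω | ∀ j : {j : Fin d // E j i}, V j.1 ω = w ⟨j.1, parent_mem_nondesc hacyc i j⟩}
    = P ({ω | V i ω = a}
        ∩ {ω | ∀ j : {j : Fin d // E j i}, V j.1 ω = w ⟨j.1, parent_mem_nondesc hacyc i j⟩})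
      * P {ω | ∀ j : {j : Fin d // j ≠ i ∧ ¬ Relation.TransGen E i j}, V j.1 ω = w j} :=
  stmt4_general E hacyc P ε hεmeas hindep f V hV i a w
end

section
/- Interventional factorization (discrete analogue of Proposition 3.1): in a discrete structural equation model, let B ⊆ [d], let b ∈ A^B, and define the intervened variables V'_1,…,V'_d : Ω → A by V'_i = b_i (constant) for i ∈ B and V'_i = f_i((V'_j)_{j∈Pa_i}) + ε_i for i ∉ B (with the same noises ε_i). Let π be a topological order of G and Pred_i(π) := {j : π⁻¹(j) < π⁻¹(i)}. Then for every v ∈ A^d satisfying P((V_j)_{j∈Pred_i(π)} = v|_{Pred_i(π)}) > 0 for every i ∉ B, one has: P(V'_1 = v_1, …, V'_d = v_d) equals 0 if v_i ≠ b_i for some i ∈ B, and equals ∏_{i∉B} P(V_i = v_i | (V_j)_{j∈Pred_i(π)} = v|_{Pred_i(π)}) otherwise, where the conditional probabilities on the right are those of the original (observational) variables V. -/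
/-!
Write `c i = v i - f i (v restricted to the parents of i)` for the noise value that `v` forces at
`i`. Along a topological order, `V' = v` holds exactly when `ε i = c i` for every `i ∉ B`, so
independence of the noises turns `P(V' = v)` into `∏_{i ∉ B} P(ε i = c i)`. On the other hand every
observational `V j` is a function of the noises `ε k` with `k` not later than `j`, so the event that
the predecessors of `i` take the values `v` is independent of `ε i`; on that event `V i = v i` is
equivalent to `ε i = c i`, hence the conditional probability of `V i = v i` given the predecessors
is `P(ε i = c i)` as well.
-/

open MeasureTheory ProbabilityTheory

namespace StructuralEquation

variable {ι A : Type*} [AddCommGroup A] {E : ι → ι → Prop}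
  (f : (i : ι) → ({j // E j i} → A) → A)

def forcedNoise (v : ι → A) (i : ι) : A := v i - f i (fun j => v j.1)

theorem eq_iff_eq_forcedNoise {x e v : ι → A} {i : ι}
    (hx : x i = f i (fun j => x j.1) + e i) (hpa : ∀ j : {j // E j i}, x j = v j) :
    x i = v i ↔ e i = forcedNoise f v i := by
  rw [hx, forcedNoise, show (fun j : {j // E j i} => x j.1) = fun j => v j.1 from funext hpa,
    eq_sub_iff_add_eq, add_comm]

variable {κ : Type*} [LinearOrder κ] [WellFoundedLT κ] {r : ι → κ}

theorem eq_of_noise_eq (hr : ∀ i j, E j i → r j < r i) {x y e e' : ι → A}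
    (hx : ∀ i, x i = f i (fun j => x j.1) + e i) (hy : ∀ i, y i = f i (fun j => y j.1) + e' i)
    (i : ι) (he : ∀ j, r j ≤ r i → e j = e' j) : x i = y i := by
  induction i using (InvImage.wf r wellFounded_lt).induction with
  | _ i ih =>
    rw [hx i, hy i, he i le_rfl]
    congr 2
    funext j
    have hji := hr i j j.2
    exact ih j hji fun k hk => he k (hk.trans hji.le)

theorem forall_eq_iff_forall_noise_eq (hr : ∀ i j, E j i → r j < r i) {B : Set ι}
    {x e v : ι → A} (hxB : ∀ i ∈ B, x i = v i)
    (hx : ∀ i ∉ B, x i = f i (fun j => x j.1) + e i) :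
    (∀ i, x i = v i) ↔ ∀ i ∉ B, e i = forcedNoise f v i := by
  refine ⟨fun h i hi => (eq_iff_eq_forcedNoise f (hx i hi) fun j => h j).1 (h i), fun he i => ?_⟩
  induction i using (InvImage.wf r wellFounded_lt).induction with
  | _ i ih =>
    by_cases hi : i ∈ B
    · exact hxB i hi
    · exact (eq_iff_eq_forcedNoise f (hx i hi) fun j => ih j (hr i j j.2)).2 (he i hi)

end StructuralEquation

theorem ProbabilityTheory.iIndepFun.measure_inter_eq_mul_of_determined {ι Ω A : Type*}
    [MeasurableSpace Ω] {P : Measure Ω} [MeasurableSpace A] [Countable A]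
    [MeasurableSingletonClass A] {ε : ι → Ω → A} (hindep : iIndepFun ε P)
    (hmeas : ∀ i, Measurable (ε i)) {S : Finset ι} {i : ι} (hi : i ∉ S) {s : Set Ω}
    (hs : ∀ ω ω', (∀ j ∈ S, ε j ω = ε j ω') → ω ∈ s → ω' ∈ s) {t : Set A}
    (ht : MeasurableSet t) :
    P (ε i ⁻¹' t ∩ s) = P (ε i ⁻¹' t) * P s := by
  set W : Ω → S → A := fun ω j => ε j ω
  have hsW : s = W ⁻¹' (W '' s) :=
    (Set.subset_preimage_image W s).antisymm fun ω' ⟨ω, hω, hW⟩ =>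
      hs ω ω' (fun j hj => congrFun hW ⟨j, hj⟩) hω
  have hindepW : IndepFun (ε i) W P :=
    (hindep.indepFun_finset {i} S (Finset.disjoint_singleton_left.2 hi) hmeas).comp
      (measurable_pi_apply (X := fun _ : ({i} : Finset ι) => A) ⟨i, Finset.mem_singleton_self i⟩)
      measurable_id
  rw [hsW]
  exact hindepW.measure_inter_preimage_eq_mul _ _ ht .of_discrete

namespace StructuralEquation

variable {ι Ω A κ : Type*} [Fintype ι] [LinearOrder κ] [WellFoundedLT κ] {r : ι → κ}
  [MeasurableSpace Ω] {P : Measure Ω} [AddCommGroup A] [MeasurableSpace A] [Countable A]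
  [MeasurableSingletonClass A] {E : ι → ι → Prop} {f : (i : ι) → ({j // E j i} → A) → A}

theorem measure_eq_inter_predecessors_eq_mul (hr : ∀ i j, E j i → r j < r i) {ε V : ι → Ω → A}
    (hindep : iIndepFun ε P) (hmeas : ∀ i, Measurable (ε i))
    (hV : ∀ i ω, V i ω = f i (fun j => V j.1 ω) + ε i ω) (v : ι → A) (i : ι) :
    P ({ω | V i ω = v i} ∩ {ω | ∀ j : {j // r j < r i}, V j.1 ω = v j.1})
      = P (ε i ⁻¹' {forcedNoise f v i}) * P {ω | ∀ j : {j // r j < r i}, V j.1 ω = v j.1} := by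
  classical
  set pred := {ω | ∀ j : {j // r j < r i}, V j.1 ω = v j.1}
  have hevent : {ω | V i ω = v i} ∩ pred = ε i ⁻¹' {forcedNoise f v i} ∩ pred := by
    ext ω
    refine and_congr_left fun hpred => ?_
    exact eq_iff_eq_forcedNoise f (x := (V · ω)) (e := (ε · ω)) (hV i ω)
      fun j => hpred ⟨j, hr i j j.2⟩
  rw [hevent]
  refine hindep.measure_inter_eq_mul_of_determined hmeas (S := {j | r j < r i}) (s := pred)
    (by simp) (fun ω ω' hω hpred j => ?_) (measurableSet_singleton _)
  rw [← hpred j, eq_of_noise_eq f hr (fun k => hV k ω') (fun k => hV k ω) j fun k hk =>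
    (hω k (by simpa using hk.trans_lt j.2)).symm]

end StructuralEquation

open StructuralEquation in
theorem stmt8_general {d : ℕ} (E : Fin d → Fin d → Prop)
    {Ω A : Type*} [MeasurableSpace Ω] (P : Measure Ω) [IsProbabilityMeasure P]
    [Fintype A] [AddCommGroup A] [MeasurableSpace A] [MeasurableSingletonClass A]
    (ε : Fin d → Ω → A) (hεmeas : ∀ i, Measurable (ε i))
    (hindep : ProbabilityTheory.iIndepFun ε P)
    (f : (i : Fin d) → ({j : Fin d // E j i} → A) → A)
    (V : Fin d → Ω → A)
    (hV : ∀ i ω, V i ω = f i (fun j => V j.1 ω) + ε i ω)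
    (π : Equiv.Perm (Fin d))
    (hπ : ∀ a b, Relation.TransGen E a b → π.symm a < π.symm b)
    (B : Finset (Fin d)) (b : {j : Fin d // j ∈ B} → A)
    (V' : Fin d → Ω → A)
    (hV'B : ∀ i, ∀ hi : i ∈ B, ∀ ω, V' i ω = b ⟨i, hi⟩)
    (hV'f : ∀ i, i ∉ B → ∀ ω, V' i ω = f i (fun j => V' j.1 ω) + ε i ω)
    (v : Fin d → A)
    (hpos : ∀ i, i ∉ B →
      P {ω | ∀ j : {j : Fin d // π.symm j < π.symm i}, V j.1 ω = v j.1} ≠ 0) :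
    ((∃ i, ∃ hi : i ∈ B, v i ≠ b ⟨i, hi⟩) → P {ω | ∀ i, V' i ω = v i} = 0)
    ∧ ((∀ i, ∀ hi : i ∈ B, v i = b ⟨i, hi⟩) →
        P {ω | ∀ i, V' i ω = v i}
          = ∏ i ∈ Bᶜ,
              P ({ω | V i ω = v i}
                  ∩ {ω | ∀ j : {j : Fin d // π.symm j < π.symm i}, V j.1 ω = v j.1})
                / P {ω | ∀ j : {j : Fin d // π.symm j < π.symm i}, V j.1 ω = v j.1}) := by
  have hr : ∀ i j, E j i → π.symm j < π.symm i := fun i j h => hπ j i (.single h)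
  refine ⟨fun ⟨i, hi, hne⟩ => measure_mono_null
    (fun ω hω => hne ((hω i).symm.trans (hV'B i hi ω))) measure_empty, fun hvb => ?_⟩
  have hevent : {ω | ∀ i, V' i ω = v i} = ⋂ i ∈ Bᶜ, ε i ⁻¹' {forcedNoise f v i} := by
    ext ω
    simpa using forall_eq_iff_forall_noise_eq f hr (B := B)
      (fun i hi => (hV'B i hi ω).trans (hvb i hi).symm) (fun i hi => hV'f i hi ω)
  rw [hevent, hindep.meas_biInter fun i _ => ⟨{_}, measurableSet_singleton _, rfl⟩]
  refine Finset.prod_congr rfl fun i hi => ?_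
  rw [measure_eq_inter_predecessors_eq_mul hr hindep hεmeas hV,
    ENNReal.mul_div_cancel_right (hpos i (Finset.mem_compl.1 hi)) (measure_ne_top _ _)]

/-- Interventional factorization (discrete analogue of Proposition 3.1): the
joint distribution of the intervened variables `V'` (where the variables in `B`
are set to the constants `b` and the others follow the same structural
equations with the same noises) vanishes if the target value disagrees with
`b` on `B`, and otherwise factorizes into the observational conditional
probabilities of each non-intervened node given its predecessors under a
topological order `π`. -/
theorem stmt8 {d : ℕ} (E : Fin d → Fin d → Prop)
    (hacyc : ∀ i, ¬ Relation.TransGen E i i)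
    {Ω A : Type*} [MeasurableSpace Ω] (P : Measure Ω) [IsProbabilityMeasure P]
    [Fintype A] [AddCommGroup A] [MeasurableSpace A] [MeasurableSingletonClass A]
    (ε : Fin d → Ω → A) (hεmeas : ∀ i, Measurable (ε i))
    (hindep : ProbabilityTheory.iIndepFun ε P)
    (f : (i : Fin d) → ({j : Fin d // E j i} → A) → A)
    (V : Fin d → Ω → A) (hVmeas : ∀ i, Measurable (V i))
    (hV : ∀ i ω, V i ω = f i (fun j => V j.1 ω) + ε i ω)
    (π : Equiv.Perm (Fin d))
    (hπ : ∀ a b, Relation.TransGen E a b → π.symm a < π.symm b)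
    (B : Finset (Fin d)) (b : {j : Fin d // j ∈ B} → A)
    (V' : Fin d → Ω → A) (hV'meas : ∀ i, Measurable (V' i))
    (hV'B : ∀ i, ∀ hi : i ∈ B, ∀ ω, V' i ω = b ⟨i, hi⟩)
    (hV'f : ∀ i, i ∉ B → ∀ ω, V' i ω = f i (fun j => V' j.1 ω) + ε i ω)
    (v : Fin d → A)
    (hpos : ∀ i, i ∉ B →
      P {ω | ∀ j : {j : Fin d // π.symm j < π.symm i}, V j.1 ω = v j.1} ≠ 0) :
    ((∃ i, ∃ hi : i ∈ B, v i ≠ b ⟨i, hi⟩) → P {ω | ∀ i, V' i ω = v i} = 0)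
    ∧ ((∀ i, ∀ hi : i ∈ B, v i = b ⟨i, hi⟩) →
        P {ω | ∀ i, V' i ω = v i}
          = ∏ i ∈ Bᶜ,
              P ({ω | V i ω = v i}
                  ∩ {ω | ∀ j : {j : Fin d // π.symm j < π.symm i}, V j.1 ω = v j.1})
                / P {ω | ∀ j : {j : Fin d // π.symm j < π.symm i}, V j.1 ω = v j.1}) :=
  stmt8_general E P ε hεmeas hindep f V hV π hπ B b V' hV'B hV'f v hpos
end

section
/- In a discrete structural equation model, let π be a topological order of G, m ∈ [d], and j ∈ π[1:m] := {π(1),…,π(m)}. Let Des_j^{π[1:m]} denote the indices in π[1:m] that are descendants of j, and W_j^{π[1:m]} the indices in π[1:m] other than j that are not descendants of j. Then H(V_j | (V_l)_{l∈π[1:m], l≠j}) = H(ε_j) − I(V_j ; (V_l)_{l∈Des_j^{π[1:m]}} | (V_l)_{l∈W_j^{π[1:m]}}). In particular, if j is a sink of the induced subgraph G^{π[1:m]}, then H(V_j | (V_l)_{l∈π[1:m], l≠j}) = H(ε_j). -/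
/-!
Split `π[1:m] \ {j}` into the non-descendants `W` and the descendants `D` of `j`. By the
definition of conditional mutual information, `H(V_j | V_W, V_D) = H(V_j | V_W) - I(V_j; V_D | V_W)`.
The non-descendants of `j` form an ancestral set, so `V_W` is a function of the noises off `j`
and is independent of `ε_j`; as `Pa_j ⊆ W`, `V_j = F(V_W) + ε_j`, whence `H(V_j | V_W) = H(ε_j)`.
If `j` is a sink of `G^{π[1:m]}`, then `D` is empty because `π[1:m]` is ancestral too, and the
mutual information vanishes.
-/

open MeasureTheory

attribute [local instance] Classical.propDecidable

/-- Shannon entropy of a finite-valued random variable. -/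
noncomputable def entropy {Ω : Type*} [MeasurableSpace Ω] (P : Measure Ω)
    {T : Type*} [Fintype T] (X : Ω → T) : ℝ :=
  ∑ x : T, Real.negMulLog ((P (X ⁻¹' {x})).toReal)

/-- Conditional entropy H(Y|X) := H(X,Y) − H(X). -/
noncomputable def condEntropy {Ω : Type*} [MeasurableSpace Ω] (P : Measure Ω)
    {S T : Type*} [Fintype S] [Fintype T] (X : Ω → S) (Y : Ω → T) : ℝ :=
  entropy P (fun ω => (X ω, Y ω)) - entropy P X

/-- Conditional mutual information I(Y;Z|X) := H(Y|X) − H(Y|X,Z). -/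
noncomputable def condMutualInfo {Ω : Type*} [MeasurableSpace Ω] (P : Measure Ω)
    {S T U : Type*} [Fintype S] [Fintype T] [Fintype U]
    (X : Ω → S) (Y : Ω → T) (Z : Ω → U) : ℝ :=
  condEntropy P X Y - condEntropy P (fun ω => (X ω, Z ω)) Y

open ProbabilityTheory Function Relation

section Entropy

variable {Ω : Type*} [MeasurableSpace Ω] (P : Measure Ω)

lemma entropy_comp_of_injective {S T : Type*} [Fintype S] [Fintype T] (X : Ω → S) {g : S → T}
    (hg : Injective g) : entropy P (fun ω => g (X ω)) = entropy P X := by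
  refine (Fintype.sum_of_injective g hg _ _ (fun t ht => ?_) (fun s => ?_)).symm
  · have : (fun ω => g (X ω)) ⁻¹' {t} = ∅ :=
      Set.eq_empty_of_forall_notMem fun ω h => ht ⟨X ω, h⟩
    simp [this]
  · congr 3
    ext ω
    simp [hg.eq_iff]

lemma condEntropy_comp_of_injective {S S' T : Type*} [Fintype S] [Fintype S'] [Fintype T]
    (X : Ω → S) (Y : Ω → T) {g : S → S'} (hg : Injective g) :
    condEntropy P (fun ω => g (X ω)) Y = condEntropy P X Y := by
  rw [condEntropy, condEntropy, ← entropy_comp_of_injective P X hg,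
    ← entropy_comp_of_injective P (fun ω => (X ω, Y ω)) (hg.prodMap injective_id)]
  rfl

lemma condMutualInfo_eq_zero_of_subsingleton {S T U : Type*} [Fintype S] [Fintype T] [Fintype U]
    [Subsingleton U] (X : Ω → S) (Y : Ω → T) (Z : Ω → U) : condMutualInfo P X Y Z = 0 := by
  rw [condMutualInfo, ← condEntropy_comp_of_injective P _ Y Prod.fst_injective, sub_self]

lemma sum_measureReal_preimage_singleton_eq_one [IsProbabilityMeasure P] {T : Type*} [Fintype T]
    [MeasurableSpace T] [MeasurableSingletonClass T] {X : Ω → T} (hX : Measurable X) :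
    ∑ t : T, P.real (X ⁻¹' {t}) = 1 := by
  rw [sum_measureReal_preimage_singleton _ fun t _ => hX (measurableSet_singleton t)]
  simp

lemma ProbabilityTheory.IndepFun.entropy_prod_eq_add [IsProbabilityMeasure P] {S T : Type*}
    [Fintype S] [MeasurableSpace S] [MeasurableSingletonClass S]
    [Fintype T] [MeasurableSpace T] [MeasurableSingletonClass T]
    {X : Ω → S} {Y : Ω → T} (hX : Measurable X) (hY : Measurable Y) (hXY : IndepFun X Y P) :
    entropy P (fun ω => (X ω, Y ω)) = entropy P X + entropy P Y := by
  have hmul : ∀ s t, P.real ((fun ω => (X ω, Y ω)) ⁻¹' {(s, t)})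
      = P.real (X ⁻¹' {s}) * P.real (Y ⁻¹' {t}) := fun s t => by
    rw [← Set.singleton_prod_singleton, Set.mk_preimage_prod, measureReal_def, measureReal_def,
      measureReal_def, hXY.measure_inter_preimage_eq_mul _ _ (measurableSet_singleton s)
      (measurableSet_singleton t), ENNReal.toReal_mul]
  simp only [entropy, Fintype.sum_prod_type, ← measureReal_def, hmul, Real.negMulLog_mul,
    Finset.sum_add_distrib, ← Finset.sum_mul, ← Finset.mul_sum,
    sum_measureReal_preimage_singleton_eq_one P hX, sum_measureReal_preimage_singleton_eq_one P hY,
    one_mul]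

lemma condEntropy_comp_add_eq_entropy_of_indepFun [IsProbabilityMeasure P] {S A : Type*}
    [Fintype S] [MeasurableSpace S] [MeasurableSingletonClass S]
    [Fintype A] [AddCommGroup A] [MeasurableSpace A] [MeasurableSingletonClass A]
    {X : Ω → S} {Y : Ω → A} (hX : Measurable X) (hY : Measurable Y) (hXY : IndepFun X Y P)
    (F : S → A) : condEntropy P X (fun ω => F (X ω) + Y ω) = entropy P Y := by
  have hg : Injective fun p : S × A => (p.1, F p.1 + p.2) := fun p q h => by
    simp only [Prod.mk.injEq] at h
    obtain ⟨h1, h2⟩ := h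
    rw [h1, add_right_inj] at h2
    exact Prod.ext h1 h2
  have hshift : entropy P (fun ω => (X ω, F (X ω) + Y ω)) = entropy P (fun ω => (X ω, Y ω)) :=
    (entropy_comp_of_injective P (fun ω => (X ω, Y ω)) hg :)
  rw [condEntropy, hshift, hXY.entropy_prod_eq_add P hX hY, add_sub_cancel_left]

lemma condEntropy_subtype_eq_sub_condMutualInfo {ι A T : Type*} [DecidableEq ι] [Fintype A] [Fintype T] {p q r : ι → Prop}
    [Fintype {l // p l}] [Fintype {l // q l}] [Fintype {l // r l}]
    (hq : ∀ l, q l → p l) (hr : ∀ l, r l → p l) (hpqr : ∀ l, p l → q l ∨ r l)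
    (V : ι → Ω → A) (Y : Ω → T) :
    condEntropy P (fun ω (l : {l // p l}) => V l ω) Y
      = condEntropy P (fun ω (l : {l // q l}) => V l ω) Y
        - condMutualInfo P (fun ω (l : {l // q l}) => V l ω) Y
            (fun ω (l : {l // r l}) => V l ω) := by
  have hinj : Injective fun w : {l // p l} → A =>
      (fun l : {l // q l} => w ⟨l, hq l l.2⟩, fun l : {l // r l} => w ⟨l, hr l l.2⟩) := by
    intro w w' h
    simp only [Prod.mk.injEq, funext_iff] at h
    funext ⟨l, hl⟩
    rcases hpqr l hl with hql | hrl
    · exact h.1 ⟨l, hql⟩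
    · exact h.2 ⟨l, hrl⟩
  rw [condMutualInfo, ← condEntropy_comp_of_injective P _ Y hinj, sub_sub_cancel]

end Entropy

def IsAncestral {ι : Type*} (E : ι → ι → Prop) (N : Set ι) : Prop :=
  ∀ ⦃p l⦄, E p l → l ∈ N → p ∈ N

namespace IsAncestral

variable {ι : Type*} {E : ι → ι → Prop} {N : Set ι}

lemma mem_of_reflTransGen (hN : IsAncestral E N) {k l : ι} (hkl : ReflTransGen E k l)
    (hl : l ∈ N) : k ∈ N := by
  induction hkl using ReflTransGen.head_induction_on with
  | refl => exact hl
  | head hkk' _ ih => exact hN hkk' ih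

lemma not_transGen_of_forall_not_rel (hN : IsAncestral E N) {j : ι}
    (hsink : ∀ l ∈ N, ¬ E j l) {l : ι} (hl : l ∈ N) : ¬ TransGen E j l := fun hjl => by
  obtain ⟨k, hjk, hkl⟩ := TransGen.head'_iff.mp hjl
  exact hsink k (hN.mem_of_reflTransGen hkl hl) hjk

end IsAncestral

lemma isAncestral_setOf_not_reflTransGen {ι : Type*} (E : ι → ι → Prop) (j : ι) :
    IsAncestral E {k | ¬ ReflTransGen E j k} :=
  fun _ _ hpl hl hjp => hl (hjp.tail hpl)

section StructuralEquations

variable {ι Ω A : Type*} {E : ι → ι → Prop} {ε V : ι → Ω → A}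
  {f : (i : ι) → ({j // E j i} → A) → A}

lemma exists_eq_comp_noise_of_isAncestral [Add A] (hwf : WellFounded E)
    (hV : ∀ i ω, V i ω = f i (fun j => V j.1 ω) + ε i ω) {N : Set ι} (hN : IsAncestral E N)
    (l : ι) (hl : l ∈ N) : ∃ g : (N → A) → A, ∀ ω, V l ω = g (fun k => ε k ω) := by
  induction l using hwf.induction with
  | _ l ih =>
    choose g hg using fun p : {p // E p l} => ih p p.2 (hN p.2 hl)
    refine ⟨fun w => f l (fun p => g p w) + w ⟨l, hl⟩, fun ω => ?_⟩
    rw [hV l ω]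
    simp only [hg]

lemma indepFun_noise_of_isAncestral [Fintype ι] [DecidableEq ι] [Add A] [Fintype A]
    [MeasurableSpace A] [MeasurableSingletonClass A] [MeasurableSpace Ω] {P : Measure Ω}
    (hwf : WellFounded E) (hV : ∀ i ω, V i ω = f i (fun j => V j.1 ω) + ε i ω)
    (hε : ∀ i, Measurable (ε i)) (hindep : iIndepFun ε P) {N : Set ι} (hN : IsAncestral E N)
    {j : ι} (hj : j ∉ N) {κ : Type*} (e : κ → ι) (he : ∀ k, e k ∈ N) :
    IndepFun (fun ω k => V (e k) ω) (ε j) P := by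
  choose g hg using fun k => exists_eq_comp_noise_of_isAncestral hwf hV hN (e k) (he k)
  have hNj : ∀ i ∈ N, i ∈ ({j}ᶜ : Finset ι) := fun i hi => by
    simpa using ne_of_mem_of_not_mem hi hj
  have := (hindep.indepFun_finset {j}ᶜ {j} disjoint_compl_left hε).comp
    (measurable_of_countable fun w k => g k fun i => w ⟨i, hNj i i.2⟩)
    (measurable_pi_apply ⟨j, Finset.mem_singleton_self j⟩)
  convert this using 1
  · funext ω k
    exact hg k ω
  · rfl

end StructuralEquations

theorem stmt10_general {d : ℕ} (E : Fin d → Fin d → Prop)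
    {Ω A : Type*} [MeasurableSpace Ω] (P : Measure Ω) [IsProbabilityMeasure P]
    [Fintype A] [AddCommGroup A] [MeasurableSpace A] [MeasurableSingletonClass A]
    (ε : Fin d → Ω → A) (hεmeas : ∀ i, Measurable (ε i))
    (hindep : ProbabilityTheory.iIndepFun ε P)
    (f : (i : Fin d) → ({j : Fin d // E j i} → A) → A)
    (V : Fin d → Ω → A) (hVmeas : ∀ i, Measurable (V i))
    (hV : ∀ i ω, V i ω = f i (fun j => V j.1 ω) + ε i ω)
    (π : Equiv.Perm (Fin d))
    (hπ : ∀ a b, Relation.TransGen E a b → π.symm a < π.symm b)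
    (m : Fin d) (j : Fin d) (hj : π.symm j ≤ m) :
    (condEntropy P (fun ω => fun l : {l : Fin d // π.symm l ≤ m ∧ l ≠ j} => V l.1 ω) (V j)
        = entropy P (ε j)
          - condMutualInfo P
              (fun ω =>
                fun l : {l : Fin d // (π.symm l ≤ m ∧ l ≠ j) ∧ ¬ Relation.TransGen E j l} =>
                  V l.1 ω)
              (V j)
              (fun ω => fun l : {l : Fin d // π.symm l ≤ m ∧ Relation.TransGen E j l} =>
                V l.1 ω))
    ∧ ((∀ l, π.symm l ≤ m → ¬ E j l) →
        condEntropy P (fun ω => fun l : {l : Fin d // π.symm l ≤ m ∧ l ≠ j} => V l.1 ω) (V j)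
          = entropy P (ε j)) := by
  have hwf : WellFounded E :=
    Subrelation.wf (fun h => hπ _ _ (.single h)) (InvImage.wf π.symm wellFounded_lt)
  have hacyc : ∀ i, ¬ TransGen E i i := fun i h => lt_irrefl _ (hπ i i h)
  have hprefix : IsAncestral E {l | π.symm l ≤ m} :=
    fun p l hpl hl => (hπ p l (.single hpl)).le.trans hl
  have hparent : ∀ p : {p // E p j}, (π.symm p ≤ m ∧ p.1 ≠ j) ∧ ¬ TransGen E j p :=
    fun ⟨p, hpj⟩ => ⟨⟨hprefix hpj hj, fun h => (hπ p j (.single hpj)).ne (congrArg _ h)⟩,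
      fun hjp => hacyc j (hjp.tail hpj)⟩
  have hcond : condEntropy P (fun ω (l : {l // (π.symm l ≤ m ∧ l ≠ j) ∧ ¬ TransGen E j l}) =>
      V l ω) (V j) = entropy P (ε j) := by
    have hnoise := indepFun_noise_of_isAncestral (P := P) hwf hV hεmeas hindep
      (isAncestral_setOf_not_reflTransGen E j) (fun h => h .refl)
      (Subtype.val : {l // (π.symm l ≤ m ∧ l ≠ j) ∧ ¬ TransGen E j l} → Fin d)
      fun ⟨l, ⟨_, hlj⟩, hjl⟩ h => (reflTransGen_iff_eq_or_transGen.mp h).elim hlj hjl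
    rw [funext (hV j)]
    exact condEntropy_comp_add_eq_entropy_of_indepFun P (measurable_pi_lambda _ fun _ => hVmeas _)
      (hεmeas j) hnoise fun w => f j fun p => w ⟨p, hparent p⟩
  refine (fun hsplit => ⟨hsplit, fun hsink => ?_⟩) ?_
  · rw [← hcond]
    apply condEntropy_subtype_eq_sub_condMutualInfo
    · exact fun l h => h.1
    · exact fun l h => ⟨h.1, fun hlj => hacyc j (hlj ▸ h.2)⟩
    · exact fun l h => (em (TransGen E j l)).symm.imp (fun h' => ⟨h, h'⟩) fun h' => ⟨h.1, h'⟩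
  · have : IsEmpty {l // π.symm l ≤ m ∧ TransGen E j l} :=
      ⟨fun ⟨l, hl, hjl⟩ => hprefix.not_transGen_of_forall_not_rel hsink hl hjl⟩
    rw [hsplit, condMutualInfo_eq_zero_of_subsingleton, sub_zero]

/-- For a topological order `π` of `G`, `m`, and `j ∈ π[1:m]`:
`H(V_j | (V_l)_{l ∈ π[1:m], l ≠ j}) = H(ε_j) − I(V_j ; Des | W)`, where `Des`
are the descendants of `j` inside `π[1:m]` and `W` the other non-descendants;
in particular if `j` is a sink of the induced subgraph `G^{π[1:m]}` then
`H(V_j | (V_l)_{l ∈ π[1:m], l ≠ j}) = H(ε_j)`. -/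
theorem stmt10 {d : ℕ} (E : Fin d → Fin d → Prop)
    (hacyc : ∀ i, ¬ Relation.TransGen E i i)
    {Ω A : Type*} [MeasurableSpace Ω] (P : Measure Ω) [IsProbabilityMeasure P]
    [Fintype A] [AddCommGroup A] [MeasurableSpace A] [MeasurableSingletonClass A]
    (ε : Fin d → Ω → A) (hεmeas : ∀ i, Measurable (ε i))
    (hindep : ProbabilityTheory.iIndepFun ε P)
    (f : (i : Fin d) → ({j : Fin d // E j i} → A) → A)
    (V : Fin d → Ω → A) (hVmeas : ∀ i, Measurable (V i))
    (hV : ∀ i ω, V i ω = f i (fun j => V j.1 ω) + ε i ω)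
    (π : Equiv.Perm (Fin d))
    (hπ : ∀ a b, Relation.TransGen E a b → π.symm a < π.symm b)
    (m : Fin d) (j : Fin d) (hj : π.symm j ≤ m) :
    (condEntropy P (fun ω => fun l : {l : Fin d // π.symm l ≤ m ∧ l ≠ j} => V l.1 ω) (V j)
        = entropy P (ε j)
          - condMutualInfo P
              (fun ω =>
                fun l : {l : Fin d // (π.symm l ≤ m ∧ l ≠ j) ∧ ¬ Relation.TransGen E j l} =>
                  V l.1 ω)
              (V j)
              (fun ω => fun l : {l : Fin d // π.symm l ≤ m ∧ Relation.TransGen E j l} =>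
                V l.1 ω))
    ∧ ((∀ l, π.symm l ≤ m → ¬ E j l) →
        condEntropy P (fun ω => fun l : {l : Fin d // π.symm l ≤ m ∧ l ≠ j} => V l.1 ω) (V j)
          = entropy P (ε j)) :=
  stmt10_general E P ε hεmeas hindep f V hVmeas hV π hπ m j hj
end

section
/- Diagonal of the precision matrix of a linear structural equation model: let W be a d×d real matrix with zero diagonal (W_{jj} = 0 for all j) such that I − Wᵀ is invertible, and let D be the diagonal d×d matrix with positive diagonal entries σ_1², …, σ_d². Define Σ := (I − Wᵀ)⁻¹ D ((I − Wᵀ)⁻¹)ᵀ. Then Σ is invertible and for every j ∈ {1,…,d}, (Σ⁻¹)_{jj} = σ_j⁻² + ∑_{l=1}^d W_{jl}² σ_l⁻². -/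
open Matrix

/-- Diagonal of the precision matrix of a linear SEM: with `W` a `d×d` matrix
with zero diagonal such that `I − Wᵀ` is invertible, and `D` diagonal with
positive entries `σ₁², …, σ_d²`, the matrix
`Σ := (I − Wᵀ)⁻¹ D ((I − Wᵀ)⁻¹)ᵀ` is invertible and
`(Σ⁻¹)_{jj} = σ_j⁻² + ∑_l W_{jl}² σ_l⁻²`. -/
theorem stmt13 {d : ℕ} (W : Matrix (Fin d) (Fin d) ℝ)
    (hWdiag : ∀ j, W j j = 0)
    (hinv : IsUnit (1 - Wᵀ))
    (σsq : Fin d → ℝ) (hσ : ∀ i, 0 < σsq i)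
    (Sig : Matrix (Fin d) (Fin d) ℝ)
    (hSig : Sig = (1 - Wᵀ)⁻¹ * Matrix.diagonal σsq * ((1 - Wᵀ)⁻¹)ᵀ) :
    IsUnit Sig ∧
    ∀ j, Sig⁻¹ j j = (σsq j)⁻¹ + ∑ l, (W j l) ^ 2 * (σsq l)⁻¹ := by
  set A : Matrix (Fin d) (Fin d) ℝ := 1 - Wᵀ with hA
  have hAinv : IsUnit A⁻¹ := (Matrix.isUnit_nonsing_inv_iff).2 hinv
  have hD : IsUnit (Matrix.diagonal σsq) := by
    rw [Matrix.isUnit_iff_isUnit_det, Matrix.det_diagonal, isUnit_iff_ne_zero]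
    exact (Finset.prod_pos (fun i _ => hσ i)).ne'
  have hAT : IsUnit ((A⁻¹)ᵀ) := (Matrix.isUnit_transpose _).2 hAinv
  have hSigU : IsUnit Sig := by
    rw [hSig]; exact (hAinv.mul hD).mul hAT
  refine ⟨hSigU, fun j => ?_⟩
  have hDinv : (Matrix.diagonal σsq)⁻¹ = Matrix.diagonal (fun i => (σsq i)⁻¹) :=
    Matrix.inv_eq_right_inv (by
      rw [Matrix.diagonal_mul_diagonal]
      convert Matrix.diagonal_one
      exact mul_inv_cancel₀ (hσ _).ne')
  have hinvSig : Sig⁻¹ = Aᵀ * (Matrix.diagonal fun i => (σsq i)⁻¹) * A := by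
    rw [hSig, Matrix.mul_inv_rev, Matrix.mul_inv_rev,
      Matrix.transpose_nonsing_inv, Matrix.nonsing_inv_nonsing_inv _
        ((Matrix.isUnit_iff_isUnit_det _).1 hinv),
      Matrix.nonsing_inv_nonsing_inv _ (by
        rw [Matrix.det_transpose]; exact (Matrix.isUnit_iff_isUnit_det _).1 hinv),
      hDinv, Matrix.mul_assoc]
  rw [hinvSig]
  have : (Aᵀ * (Matrix.diagonal fun i => (σsq i)⁻¹) * A) j j
      = ∑ k, A k j * ((σsq k)⁻¹ * A k j) := by
    rw [Matrix.mul_assoc, Matrix.mul_apply]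
    congr 1; ext k
    rw [Matrix.diagonal_mul, Matrix.transpose_apply]
  rw [this]
  have hterm : ∀ k, A k j * ((σsq k)⁻¹ * A k j)
      = (if j = k then (σsq k)⁻¹ else 0) + (W j k) ^ 2 * (σsq k)⁻¹ := by
    intro k
    by_cases h : j = k
    · subst h
      simp [hA, Matrix.one_apply, hWdiag j]
    · have h' : k ≠ j := fun hh => h hh.symm
      simp only [hA, Matrix.sub_apply, Matrix.one_apply_ne h', Matrix.transpose_apply,
        if_neg h, zero_add]
      ring
  rw [Finset.sum_congr rfl (fun k _ => hterm k), Finset.sum_add_distrib,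
    Finset.sum_ite_eq (Finset.univ) j (fun k => (σsq k)⁻¹)]
  simp
end
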